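/- Let A be a commutative ℚ-algebra, ε ∈ {1, −1}, and let (a_{ij}) be a family of elements of A indexed by ordered pairs of distinct elements i ≠ j of an index set, satisfying: a_{ji} = ε·a_{ij} for all i ≠ j; a_{ij}² = 0 for all i ≠ j; and the Arnol'd relation a_{ij}·a_{jk} + a_{jk}·a_{ki} + a_{ki}·a_{ij} = 0 for all pairwise distinct i, j, k. Then for every r ≥ 2 and every sequence of pairwise distinct indices i_1, i_2, …, i_r, the cyclic product a_{i_1 i_2} · a_{i_2 i_3} · ⋯ · a_{i_{r-1} i_r} · a_{i_r i_1} equals 0. -/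

import Mathlib

/-!
Induction on the length of the cycle. For a cycle `x, y, z, …, x`, the Arnol'd relation rewrites
`a x y * a y z` as `-(a y z + a x y) * a z x`, and `a z x = ε * a x z`; so the product is a multiple
of the cycle `x, z, …, x` with `y` removed, which vanishes by induction. For two vertices the cycle
`a x y * a y x = ε * (a x y)²` vanishes because `(a x y)² = 0`.
-/

section

variable {ι A : Type*} [CommRing A]

def pathProd (a : ι → ι → A) : List ι → A
  | x :: y :: l => a x y * pathProd a (y :: l)
  | _ => 1

theorem prod_castSucc_succ_eq_pathProd (a : ι → ι → A) :
    ∀ {m : ℕ} (g : Fin (m + 1) → ι),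
      ∏ k : Fin m, a (g k.castSucc) (g k.succ) = pathProd a (List.ofFn g)
  | 0, g => by simp [pathProd]
  | m + 1, g => by
    rw [Fin.prod_univ_succ, List.ofFn_succ, List.ofFn_succ]
    simp only [← Fin.succ_castSucc]
    rw [prod_castSucc_succ_eq_pathProd a (fun k => g k.succ), List.ofFn_succ]
    rfl

theorem pathProd_cycle_eq_zero {a : ι → ι → A} {ε : A}
    (hsym : ∀ i j, i ≠ j → a j i = ε * a i j)
    (hsq : ∀ i j, i ≠ j → a i j * a i j = 0)
    (harn : ∀ i j k, i ≠ j → j ≠ k → i ≠ k →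
      a i j * a j k + a j k * a k i + a k i * a i j = 0)
    (x : ι) (l : List ι) (hl : l ≠ []) (hnd : (x :: l).Nodup) :
    pathProd a (x :: l ++ [x]) = 0 := by
  induction l with
  | nil => exact absurd rfl hl
  | cons y t ih =>
    cases t with
    | nil =>
      have hxy : x ≠ y := by simpa using hnd
      simp only [List.cons_append, List.nil_append, pathProd, mul_one]
      rw [hsym x y hxy]
      linear_combination ε * hsq x y hxy
    | cons z l =>
      simp only [List.nodup_cons, List.mem_cons, not_or] at hnd
      have hxy : x ≠ y := hnd.1.1
      have hyz : y ≠ z := hnd.2.1.1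
      have hxz : x ≠ z := hnd.1.2.1
      set P := pathProd a (z :: l ++ [x])
      have hshort : a x z * P = 0 :=
        ih (List.cons_ne_nil _ _) (by simp_all)
      have hshort' : a z x * P = 0 := by rw [hsym x z hxz, mul_assoc, hshort, mul_zero]
      change a x y * (a y z * P) = 0
      linear_combination P * harn x y z hxy hyz hxz - (a y z + a x y) * hshort'

theorem prod_cyclic_eq_pathProd (a : ι → ι → A) {n : ℕ} (f : Fin (n + 1) → ι) :
    ∏ k : Fin (n + 1), a (f k) (f ⟨(k.val + 1) % (n + 1), Nat.mod_lt _ n.succ_pos⟩) =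
      pathProd a (List.ofFn f ++ [f 0]) := by
  let g : Fin (n + 2) → ι := Fin.snoc f (f 0)
  have hnext (k : Fin (n + 1)) :
      g k.succ = f ⟨(k.val + 1) % (n + 1), Nat.mod_lt _ n.succ_pos⟩ := by
    cases k using Fin.lastCases with
    | last => simp [g]
    | cast i =>
      rw [Fin.succ_castSucc]
      simp only [g, Fin.snoc_castSucc]
      congr
      ext
      simp [Nat.mod_eq_of_lt]
  have hg : List.ofFn g = List.ofFn f ++ [f 0] := by
    rw [List.ofFn_succ']
    simp [g]
  rw [← hg, ← prod_castSucc_succ_eq_pathProd]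
  refine Finset.prod_congr rfl fun k _ => ?_
  rw [hnext]
  simp [g]
end

/-- In a commutative `ℚ`-algebra, given a family `a i j` (for `i ≠ j`) with
`a j i = ε a i j` (`ε = ±1`), `(a i j)² = 0` and the Arnol'd relations, every cyclic
product `a_{i₁ i₂} a_{i₂ i₃} ⋯ a_{i_r i₁}` over `r ≥ 2` pairwise distinct indices
vanishes. -/
theorem stmt7 (A : Type*) [CommRing A] (ι : Type*) (ε : A)
    (a : ι → ι → A)
    (hsym : ∀ i j, i ≠ j → a j i = ε * a i j)
    (hsq : ∀ i j, i ≠ j → a i j * a i j = 0)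
    (harn : ∀ i j k, i ≠ j → j ≠ k → i ≠ k →
      a i j * a j k + a j k * a k i + a k i * a i j = 0)
    (r : ℕ) (hr : 2 ≤ r) (f : Fin r → ι) (hf : Function.Injective f) :
    ∏ k : Fin r, a (f k) (f ⟨(k.val + 1) % r, Nat.mod_lt _ (by omega)⟩) = 0 := by
  obtain ⟨n, rfl⟩ : ∃ n, r = n + 2 := ⟨r - 2, by omega⟩
  have hnd : (f 0 :: List.ofFn fun i => f i.succ).Nodup := by
    rw [← List.ofFn_succ]
    exact List.nodup_ofFn.mpr hf
  rw [prod_cyclic_eq_pathProd, List.ofFn_succ]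
  exact pathProd_cycle_eq_zero hsym hsq harn _ _ (by simp) hnd
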